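/- arXiv:1608.08433 — 5 statements merged into one kernel-verified Lean document; each statement's English description precedes it below -/
import Mathlib

section
/- Let 0 < β ≤ 1/2 and 0 ≤ α ≤ β/2, and let A = {a_1 < a_2 < ...} and B = {b_1 < b_2 < ...} be two infinite subsets of ℕ such that (1) a_i − b_i = o(a_i^{β−α}) as i → ∞; (2) A(n) − B(n) = O(n^{α}); and (3) there is a constant c > 0 with A(n) ≤ c·n^{β} and B(n) ≤ c·n^{β} for all n ∈ ℕ. Then, as the integer N → ∞, Σ_{n=0}^{∞} (1 − 1/N)^{2n} · ( Σ_{a ∈ A, a ≤ n} a − Σ_{b ∈ B, b ≤ n} b )^2 = o(N^{2+2β}). -/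
open Filter Asymptotics

/-- The counting function `A(n) = |{a ∈ A : a ≤ n}|`. -/
noncomputable def countFn (A : Set ℕ) (n : ℕ) : ℕ := (A ∩ Set.Iic n).ncard

/-- `∑_{a ∈ A, a ≤ n} a`, as a real number. -/
noncomputable def sumFn (A : Set ℕ) (n : ℕ) : ℝ :=
  ∑ a ∈ Finset.range (n + 1), Set.indicator A (fun x => (x : ℝ)) a

/-!
Write `d(n) = A(n) - B(n)`. Partial summation gives `∑_{a ∈ A, a ≤ n} a = n A(n) - ∑_{m < n} A(m)`,
so the difference of the two sums is `n d(n) - ∑_{m < n} d(m)`. Pairing the `i`-th elements of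
`A` and `B` bounds `∑_{m < M} |d(m)|` by `∑_{i < K} |a_i - b_i|` with `K ≤ c M^β`, and for these
`i` eventually `a_i ≤ 2M`; hence `∑_{m < M} |d(m)| = o(M^{2β-α})`, and with `d(m) = O(m^α)` also
`∑_{m < M} d(m)² = o(M^{2β})`. Summation by parts against the weight `n^k (1 - 1/N)^{2n}`, whose
moments `∑ (n+1)^t (1 - 1/N)^{2n}` are `O(N^{t+1})`, turns partial sums that are `o(M^s)` into
weighted sums that are `o(N^{k+s})`. Applied to `n² d(n)²` and to `(∑_{m < n} |d(m)|)²`, this gives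
`o(N^{2+2β})` and `o(N^{4β-2α+1})`, and `4β - 2α + 1 ≤ 2 + 2β` because `β ≤ 1/2`.
-/

open Finset

section GeometricWeight

variable {L : ℝ}

lemma one_sub_one_div_nonneg (hL : 1 ≤ L) : 0 ≤ 1 - 1 / L := by
  rw [sub_nonneg, div_le_one (by linarith)]
  exact hL

lemma half_le_one_sub_one_div (hL : 2 ≤ L) : 1 / 2 ≤ 1 - 1 / L := by
  linarith [one_div_le_one_div_of_le (by norm_num) hL]

lemma rpow_le_mul_exp {t x : ℝ} (ht : 0 ≤ t) (hx : 0 ≤ x) (hL : 0 < L) :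
    x ^ t ≤ ((t + 1) * L) ^ t * Real.exp (x / L) := by
  have hK : 0 < (t + 1) * L := by positivity
  have hx_le : x ≤ (t + 1) * L * Real.exp (x / ((t + 1) * L)) := by
    calc x = (t + 1) * L * (x / ((t + 1) * L)) := by field_simp
      _ ≤ _ := by gcongr; linarith [Real.add_one_le_exp (x / ((t + 1) * L))]
  have hexp : t * (x / ((t + 1) * L)) ≤ x / L := by
    rw [mul_div_assoc', div_le_div_iff₀ hK hL]
    nlinarith [mul_nonneg hx hL.le]
  calc x ^ t ≤ ((t + 1) * L * Real.exp (x / ((t + 1) * L))) ^ t := Real.rpow_le_rpow hx hx_le ht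
    _ = ((t + 1) * L) ^ t * Real.exp (t * (x / ((t + 1) * L))) := by
        rw [Real.mul_rpow hK.le (Real.exp_nonneg _), ← Real.exp_mul, mul_comm (x / _)]
    _ ≤ _ := by gcongr

lemma one_sub_one_div_pow_le_exp (hL : 1 ≤ L) (n : ℕ) : (1 - 1 / L) ^ n ≤ Real.exp (-(n / L)) := by
  have hr := one_sub_one_div_nonneg hL
  calc (1 - 1 / L) ^ n ≤ Real.exp (-(1 / L)) ^ n := by
        gcongr; linarith [Real.add_one_le_exp (-(1 / L))]
    _ = Real.exp (-(n / L)) := by rw [← Real.exp_nat_mul]; ring_nf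

lemma rpow_mul_one_sub_one_div_pow_le {t : ℝ} (ht : 0 ≤ t) (hL : 1 ≤ L) (n : ℕ) :
    (n : ℝ) ^ t * (1 - 1 / L) ^ n ≤ ((t + 1) * L) ^ t := by
  calc (n : ℝ) ^ t * (1 - 1 / L) ^ n
      ≤ ((t + 1) * L) ^ t * Real.exp (n / L) * Real.exp (-(n / L)) := by
        have hr := one_sub_one_div_nonneg hL
        gcongr
        · exact rpow_le_mul_exp ht n.cast_nonneg (by linarith)
        · exact one_sub_one_div_pow_le_exp hL n
    _ = ((t + 1) * L) ^ t := by rw [mul_assoc, ← Real.exp_add]; simp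

lemma rpow_succ_mul_one_sub_one_div_pow_two_mul_le {t : ℝ} (ht : 0 ≤ t) (hL : 2 ≤ L) (n : ℕ) :
    ((n : ℝ) + 1) ^ t * (1 - 1 / L) ^ (2 * n) ≤ 2 * ((t + 1) * L) ^ t * (1 - 1 / L) ^ n := by
  set r := 1 - 1 / L
  have hr : 1 / 2 ≤ r := half_le_one_sub_one_div hL
  have hpow : r ^ n ≤ 2 * r ^ (n + 1) := by
    rw [pow_succ]; nlinarith [pow_nonneg (show (0 : ℝ) ≤ r by linarith) n]
  have hmain := rpow_mul_one_sub_one_div_pow_le ht (by linarith : 1 ≤ L) (n + 1)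
  push_cast at hmain
  calc ((n : ℝ) + 1) ^ t * r ^ (2 * n) = ((n : ℝ) + 1) ^ t * r ^ n * r ^ n := by ring
    _ ≤ ((n : ℝ) + 1) ^ t * (2 * r ^ (n + 1)) * r ^ n := by gcongr
    _ = 2 * (((n : ℝ) + 1) ^ t * r ^ (n + 1)) * r ^ n := by ring
    _ ≤ 2 * ((t + 1) * L) ^ t * r ^ n := by gcongr

lemma sum_range_one_sub_one_div_pow_le (hL : 1 < L) (M : ℕ) :
    ∑ n ∈ range M, (1 - 1 / L) ^ n ≤ L := by
  have h1 : 1 / L < 1 := by rw [div_lt_one (by linarith)]; exact hL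
  have h0 : 0 < 1 / L := by positivity
  have := geom_sum_Ico_le_of_lt_one (m := 0) (n := M) (by linarith) (by linarith : 1 - 1 / L < 1)
  simpa [← range_eq_Ico] using this

/-- The two terms produced by summation by parts against the weight `(1 - 1/L) ^ (2n)`. -/
lemma two_div_mul_sum_range_add_le {t : ℝ} (ht : 0 ≤ t) (hL : 2 ≤ L) (M : ℕ) :
    2 / L * ∑ n ∈ range M, ((n : ℝ) + 1) ^ t * (1 - 1 / L) ^ (2 * n)
      + ((M : ℝ) + 1) ^ t * (1 - 1 / L) ^ (2 * M) ≤ 6 * ((t + 1) * L) ^ t := by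
  set K := ((t + 1) * L) ^ t
  have hK : 0 ≤ K := by positivity
  have hr0 := one_sub_one_div_nonneg (by linarith : 1 ≤ L)
  have hsum : ∑ n ∈ range M, ((n : ℝ) + 1) ^ t * (1 - 1 / L) ^ (2 * n) ≤ 2 * K * L :=
    calc _ ≤ ∑ n ∈ range M, 2 * K * (1 - 1 / L) ^ n :=
          sum_le_sum fun n _ => rpow_succ_mul_one_sub_one_div_pow_two_mul_le ht hL n
      _ = 2 * K * ∑ n ∈ range M, (1 - 1 / L) ^ n := by rw [mul_sum]
      _ ≤ 2 * K * L := by gcongr; exact sum_range_one_sub_one_div_pow_le (by linarith) M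
  have hlast : ((M : ℝ) + 1) ^ t * (1 - 1 / L) ^ (2 * M) ≤ 2 * K :=
    calc _ ≤ 2 * K * (1 - 1 / L) ^ M := rpow_succ_mul_one_sub_one_div_pow_two_mul_le ht hL M
      _ ≤ 2 * K * 1 := by gcongr; exact pow_le_one₀ hr0 (by linarith [show 0 < 1 / L by positivity])
      _ = 2 * K := mul_one _
  have hL0 : 0 < L := by linarith
  calc _ ≤ 2 / L * (2 * K * L) + 2 * K := by gcongr
    _ = 6 * K := by field_simp; ring

lemma rpow_mul_pow_two_mul_sub_rpow_mul_pow_two_mul_succ_le {k : ℝ} (hk : 0 ≤ k) (hL : 2 ≤ L)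
    (n : ℕ) :
    (n : ℝ) ^ k * (1 - 1 / L) ^ (2 * n) - ((n + 1 : ℕ) : ℝ) ^ k * (1 - 1 / L) ^ (2 * (n + 1))
      ≤ 2 / L * ((n : ℝ) ^ k * (1 - 1 / L) ^ (2 * n)) := by
  set r := 1 - 1 / L
  have hr := one_sub_one_div_nonneg (by linarith : 1 ≤ L)
  have hmono : (n : ℝ) ^ k ≤ ((n + 1 : ℕ) : ℝ) ^ k := by gcongr; simp
  have hstep : 1 - r ^ 2 ≤ 2 / L := by
    rw [show 2 / L = 2 * (1 / L) by ring]; nlinarith [sq_nonneg (1 / L)]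
  have hnk : 0 ≤ (n : ℝ) ^ k * r ^ (2 * n) := by positivity
  rw [show 2 * (n + 1) = 2 * n + 2 by ring, pow_add]
  nlinarith [mul_le_mul_of_nonneg_right hmono (mul_nonneg (pow_nonneg hr (2 * n)) (sq_nonneg r))]

end GeometricWeight

section SummationByParts

lemma sum_range_mul_eq_sum_range_sub_mul_add (w q : ℕ → ℝ) (M : ℕ) :
    ∑ n ∈ range M, w n * q n
      = ∑ n ∈ range M, (w n - w (n + 1)) * ∑ m ∈ range (n + 1), q m
        + w M * ∑ m ∈ range M, q m := by
  induction M with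
  | zero => simp
  | succ M ih => rw [sum_range_succ, ih, sum_range_succ, sum_range_succ q M]; ring

lemma sum_range_mul_le_of_sum_range_le {w v q G : ℕ → ℝ} (hq : ∀ n, 0 ≤ q n) (hw : ∀ n, 0 ≤ w n)
    (hv : ∀ n, 0 ≤ v n) (hwv : ∀ n, w n - w (n + 1) ≤ v n)
    (hG : ∀ n, ∑ m ∈ range n, q m ≤ G n) (M : ℕ) :
    ∑ n ∈ range M, w n * q n ≤ ∑ n ∈ range M, v n * G (n + 1) + w M * G M := by
  rw [sum_range_mul_eq_sum_range_sub_mul_add]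
  refine add_le_add (sum_le_sum fun n _ => ?_) (mul_le_mul_of_nonneg_left (hG M) (hw M))
  calc (w n - w (n + 1)) * ∑ m ∈ range (n + 1), q m
      ≤ v n * ∑ m ∈ range (n + 1), q m :=
        mul_le_mul_of_nonneg_right (hwv n) (sum_nonneg fun m _ => hq m)
    _ ≤ v n * G (n + 1) := mul_le_mul_of_nonneg_left (hG _) (hv n)

lemma sum_range_le_sum_range_add_sum_range {e u : ℕ → ℝ} {m₀ M : ℕ} (he : ∀ m, 0 ≤ e m)
    (hu : ∀ m, 0 ≤ u m) (heu : ∀ m, m₀ ≤ m → m < M → e m ≤ u m) :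
    ∑ m ∈ range M, e m ≤ ∑ m ∈ range m₀, e m + ∑ m ∈ range M, u m := by
  rw [← sum_filter_add_sum_filter_not (range M) (· < m₀)]
  gcongr ?_ + ?_
  · exact sum_le_sum_of_subset_of_nonneg (fun m hm => by simp_all) fun m _ _ => he m
  · calc _ ≤ ∑ m ∈ (range M).filter (¬ · < m₀), u m :=
          sum_le_sum fun m hm => by
            simp only [mem_filter, mem_range] at hm
            exact heu m (by omega) hm.1
      _ ≤ _ := sum_le_sum_of_subset_of_nonneg (filter_subset _ _) fun m _ _ => hu m

end SummationByParts

section LittleO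

lemma exists_forall_le_add_of_isLittleO {f g : ℕ → ℝ} (h : f =o[atTop] g) {δ : ℝ} (hδ : 0 < δ) :
    ∃ C, ∀ n, f n ≤ C + δ * ‖g n‖ := by
  have hbdd : IsBoundedUnder (· ≤ ·) atTop fun n => f n - δ * ‖g n‖ :=
    isBoundedUnder_of_eventually_le <| (h.def hδ).mono fun n hn => by
      linarith [le_abs_self (f n), Real.norm_eq_abs (f n)]
  obtain ⟨C, hC⟩ := hbdd.bddAbove_range
  exact ⟨C, fun n => by linarith [hC ⟨n, rfl⟩]⟩

lemma isLittleO_of_forall_exists_le_add {α : Type*} {l : Filter α} {f g : α → ℝ}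
    (hg : Tendsto g l atTop) (h : ∀ δ > 0, ∃ C, ∀ᶠ x in l, ‖f x‖ ≤ C + δ * g x) : f =o[l] g := by
  refine isLittleO_iff.mpr fun ε hε => ?_
  obtain ⟨C, hC⟩ := h (ε / 2) (by positivity)
  filter_upwards [hC, hg.eventually_ge_atTop (2 * C / ε), hg.eventually_ge_atTop 0]
    with x hx hCx hx0
  rw [Real.norm_of_nonneg hx0]
  have : C ≤ ε / 2 * g x := by rw [div_le_iff₀ hε] at hCx; linarith
  linarith

lemma tendsto_natCast_rpow_atTop {s : ℝ} (hs : 0 < s) :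
    Tendsto (fun n : ℕ => (n : ℝ) ^ s) atTop atTop :=
  (tendsto_rpow_atTop hs).comp tendsto_natCast_atTop_atTop

lemma isLittleO_sum_range_of_monotone {f : ℕ → ℝ} (hf : Monotone f) (hf0 : ∀ n, 0 ≤ f n) {γ : ℝ}
    (h : f =o[atTop] fun n : ℕ => (n : ℝ) ^ γ) :
    (fun n : ℕ => ∑ m ∈ range n, f m) =o[atTop] fun n : ℕ => (n : ℝ) ^ (γ + 1) := by
  have hsum : (fun n : ℕ => ∑ m ∈ range n, f m) =O[atTop] fun n : ℕ => (n : ℝ) * f n :=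
    IsBigO.of_bound 1 <| Eventually.of_forall fun n => by
      rw [Real.norm_of_nonneg (sum_nonneg fun m _ => hf0 m),
        Real.norm_of_nonneg (mul_nonneg n.cast_nonneg (hf0 n)), one_mul]
      simpa using sum_le_sum fun m (hm : m ∈ range n) => hf (mem_range.mp hm).le
  refine hsum.trans_isLittleO
    (((isBigO_refl _ _).mul_isLittleO h).congr' EventuallyEq.rfl ?_)
  filter_upwards [eventually_ne_atTop 0] with n hn
  rw [Real.rpow_add_one (Nat.cast_ne_zero.mpr hn), mul_comm]

lemma isLittleO_sum_range_sq_sum_range_abs {f : ℕ → ℝ} {γ : ℝ}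
    (h : (fun n : ℕ => ∑ m ∈ range n, |f m|) =o[atTop] fun n : ℕ => (n : ℝ) ^ γ) :
    (fun n : ℕ => ∑ m ∈ range n, (∑ k ∈ range m, |f k|) ^ 2)
      =o[atTop] fun n : ℕ => (n : ℝ) ^ (γ * 2 + 1) := by
  have hmono : Monotone fun n => (∑ m ∈ range n, |f m|) ^ 2 := fun m n hmn =>
    pow_le_pow_left₀ (sum_nonneg fun _ _ => abs_nonneg _)
      (sum_le_sum_of_subset_of_nonneg (range_subset_range.mpr hmn) fun _ _ _ => abs_nonneg _) 2
  refine isLittleO_sum_range_of_monotone hmono (fun n => sq_nonneg _)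
    ((h.pow two_pos).congr_right fun n => ?_)
  rw [← Real.rpow_mul_natCast n.cast_nonneg, Nat.cast_ofNat]

end LittleO

lemma rpow_mul_add_le {x y z k s C δ : ℝ} (hx : 0 ≤ x) (hxy : x ≤ y) (hz : 0 ≤ z) (hzy : z ≤ y)
    (hk : 0 ≤ k) (hs : 0 < s) (hC : 0 ≤ C) (hδ : 0 ≤ δ) :
    x ^ k * (C + δ * z ^ s) ≤ C * y ^ k + δ * y ^ (k + s) := by
  have hy : 0 ≤ y := hx.trans hxy
  calc x ^ k * (C + δ * z ^ s) ≤ y ^ k * (C + δ * y ^ s) :=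
        mul_le_mul (Real.rpow_le_rpow hx hxy hk) (by gcongr) (by positivity)
          (Real.rpow_nonneg hy k)
    _ = _ := by rw [Real.rpow_add' hy (by linarith)]; ring

lemma sum_range_rpow_mul_le {q : ℕ → ℝ} (hq : ∀ n, 0 ≤ q n) {k s C δ L : ℝ} (hk : 0 ≤ k)
    (hs : 0 < s) (hδ : 0 ≤ δ) (hQ : ∀ n, ∑ m ∈ range n, q m ≤ C + δ * (n : ℝ) ^ s)
    (hL : 2 ≤ L) (M : ℕ) :
    ∑ n ∈ range M, (n : ℝ) ^ k * (1 - 1 / L) ^ (2 * n) * q n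
      ≤ 6 * C * ((k + 1) * L) ^ k + 6 * δ * ((k + s + 1) * L) ^ (k + s) := by
  have hC : 0 ≤ C := by simpa [Real.zero_rpow hs.ne'] using hQ 0
  have hr := one_sub_one_div_nonneg (by linarith : 1 ≤ L)
  set ρ : ℕ → ℝ := fun n => (1 - 1 / L) ^ (2 * n)
  have hρ : ∀ n, 0 ≤ ρ n := fun n => pow_nonneg hr _
  have h2L : 0 ≤ 2 / L := div_nonneg zero_le_two (by linarith)
  have habel := sum_range_mul_le_of_sum_range_le hq (w := fun n => (n : ℝ) ^ k * ρ n)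
    (fun n => by positivity) (fun n => mul_nonneg h2L (by positivity))
    (rpow_mul_pow_two_mul_sub_rpow_mul_pow_two_mul_succ_le hk hL) hQ M
  push_cast at habel
  have hterm : ∀ n : ℕ, 2 / L * ((n : ℝ) ^ k * ρ n) * (C + δ * ((n : ℝ) + 1) ^ s)
      ≤ C * (2 / L * (((n : ℝ) + 1) ^ k * ρ n))
        + δ * (2 / L * (((n : ℝ) + 1) ^ (k + s) * ρ n)) := fun n => by
    linear_combination mul_le_mul_of_nonneg_left (rpow_mul_add_le (y := n + 1)
      n.cast_nonneg (by linarith) (by positivity) le_rfl hk hs hC hδ) (mul_nonneg h2L (hρ n))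
  have hlast : (M : ℝ) ^ k * ρ M * (C + δ * (M : ℝ) ^ s)
      ≤ C * (((M : ℝ) + 1) ^ k * ρ M) + δ * (((M : ℝ) + 1) ^ (k + s) * ρ M) := by
    linear_combination mul_le_mul_of_nonneg_left (rpow_mul_add_le (y := M + 1)
      M.cast_nonneg (by linarith) M.cast_nonneg (by linarith) hk hs hC hδ) (hρ M)
  calc ∑ n ∈ range M, (n : ℝ) ^ k * ρ n * q n
      ≤ ∑ n ∈ range M, 2 / L * ((n : ℝ) ^ k * ρ n) * (C + δ * ((n : ℝ) + 1) ^ s)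
        + (M : ℝ) ^ k * ρ M * (C + δ * (M : ℝ) ^ s) := habel
    _ ≤ C * (2 / L * ∑ n ∈ range M, ((n : ℝ) + 1) ^ k * ρ n + ((M : ℝ) + 1) ^ k * ρ M)
        + δ * (2 / L * ∑ n ∈ range M, ((n : ℝ) + 1) ^ (k + s) * ρ n
          + ((M : ℝ) + 1) ^ (k + s) * ρ M) := by
      have := add_le_add (sum_le_sum fun n (_ : n ∈ range M) => hterm n) hlast
      simp only [sum_add_distrib, ← mul_sum] at this
      linarith
    _ ≤ C * (6 * ((k + 1) * L) ^ k) + δ * (6 * ((k + s + 1) * L) ^ (k + s)) := by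
      gcongr
      · exact two_div_mul_sum_range_add_le hk hL M
      · exact two_div_mul_sum_range_add_le (by linarith) hL M
    _ = _ := by ring

theorem eventually_sum_range_rpow_mul_le {q : ℕ → ℝ} (hq : ∀ n, 0 ≤ q n) {k s : ℝ} (hk : 0 ≤ k)
    (hs : 0 < s) (hQ : (fun n : ℕ => ∑ m ∈ range n, q m) =o[atTop] fun n : ℕ => (n : ℝ) ^ s)
    {ε : ℝ} (hε : 0 < ε) :
    ∀ᶠ L in atTop, ∀ M, ∑ n ∈ range M, (n : ℝ) ^ k * (1 - 1 / L) ^ (2 * n) * q n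
      ≤ ε * L ^ (k + s) := by
  set K := 12 * (k + s + 1) ^ (k + s)
  have hK : 0 < K := by positivity
  obtain ⟨C, hC⟩ := exists_forall_le_add_of_isLittleO hQ (div_pos hε hK)
  have hQ' : ∀ n, ∑ m ∈ range n, q m ≤ C + ε / K * (n : ℝ) ^ s := fun n => by
    simpa [Real.norm_of_nonneg (Real.rpow_nonneg n.cast_nonneg s)] using hC n
  filter_upwards [eventually_ge_atTop 2,
    (tendsto_rpow_atTop hs).eventually_ge_atTop (12 * C * (k + 1) ^ k / ε)] with L hL hLs M
  have hL0 : 0 < L := by linarith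
  have hsplit : L ^ (k + s) = L ^ k * L ^ s := Real.rpow_add hL0 k s
  have hCL : 12 * C * (k + 1) ^ k ≤ ε * L ^ s := by rwa [div_le_iff₀' hε] at hLs
  calc _ ≤ 6 * C * ((k + 1) * L) ^ k + 6 * (ε / K) * ((k + s + 1) * L) ^ (k + s) :=
        sum_range_rpow_mul_le hq hk hs (by positivity) hQ' hL M
    _ = 6 * C * (k + 1) ^ k * L ^ k + ε / 2 * L ^ (k + s) := by
        rw [Real.mul_rpow (by linarith) hL0.le, Real.mul_rpow (by linarith) hL0.le]
        field_simp
        ring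
    _ ≤ ε / 2 * L ^ k * L ^ s + ε / 2 * L ^ (k + s) := by
        have := mul_le_mul_of_nonneg_right hCL (Real.rpow_nonneg hL0.le k)
        linarith
    _ = ε * L ^ (k + s) := by rw [hsplit]; ring

theorem isLittleO_sum_range_sq {d : ℕ → ℝ} {α γ : ℝ} (hα : 0 ≤ α) (hαγ : 0 < α + γ)
    (hd : d =O[atTop] fun n : ℕ => (n : ℝ) ^ α)
    (hS : (fun M : ℕ => ∑ m ∈ range M, |d m|) =o[atTop] fun M : ℕ => (M : ℝ) ^ γ) :
    (fun M : ℕ => ∑ m ∈ range M, d m ^ 2) =o[atTop] fun M : ℕ => (M : ℝ) ^ (α + γ) := by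
  obtain ⟨C, hC, hCd⟩ := hd.exists_pos
  obtain ⟨m₀, hm₀⟩ := eventually_atTop.mp hCd.bound
  refine isLittleO_of_forall_exists_le_add (tendsto_natCast_rpow_atTop hαγ) fun δ hδ =>
    ⟨∑ m ∈ range m₀, d m ^ 2, ?_⟩
  filter_upwards [hS.def (div_pos hδ hC), eventually_gt_atTop 0] with M hM hM0
  have hM0' : (0 : ℝ) < M := Nat.cast_pos.mpr hM0
  rw [Real.norm_of_nonneg (sum_nonneg fun m _ => abs_nonneg _),
    Real.norm_of_nonneg (Real.rpow_nonneg hM0'.le _)] at hM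
  rw [Real.norm_of_nonneg (sum_nonneg fun m _ => sq_nonneg _)]
  have hsq : ∀ m, m₀ ≤ m → m < M → d m ^ 2 ≤ C * (M : ℝ) ^ α * |d m| := fun m hm hmM => by
    have hdm := hm₀ m hm
    rw [Real.norm_eq_abs, Real.norm_of_nonneg (Real.rpow_nonneg m.cast_nonneg _)] at hdm
    have hmM : (m : ℝ) ^ α ≤ (M : ℝ) ^ α := by gcongr
    rw [← sq_abs]
    nlinarith [abs_nonneg (d m), mul_le_mul_of_nonneg_left hmM hC.le]
  calc ∑ m ∈ range M, d m ^ 2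
      ≤ ∑ m ∈ range m₀, d m ^ 2 + ∑ m ∈ range M, C * (M : ℝ) ^ α * |d m| :=
        sum_range_le_sum_range_add_sum_range (fun m => sq_nonneg _)
          (fun m => by positivity) hsq
    _ = ∑ m ∈ range m₀, d m ^ 2 + C * (M : ℝ) ^ α * ∑ m ∈ range M, |d m| := by rw [mul_sum]
    _ ≤ ∑ m ∈ range m₀, d m ^ 2 + C * (M : ℝ) ^ α * (δ / C * (M : ℝ) ^ γ) := by gcongr
    _ = ∑ m ∈ range m₀, d m ^ 2 + δ * (M : ℝ) ^ (α + γ) := by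
        rw [Real.rpow_add hM0']; field_simp

section Counting

variable {A B : Set ℕ}

lemma countFn_eq_count (A : Set ℕ) [DecidablePred (· ∈ A)] (n : ℕ) :
    countFn A n = Nat.count (· ∈ A) (n + 1) := by
  rw [Nat.count_eq_card_filter_range, countFn, ← Set.ncard_coe_finset]
  congr 1
  ext x
  simp [and_comm]

lemma countFn_mono (A : Set ℕ) : Monotone (countFn A) := fun m n h => by
  classical
  rw [countFn_eq_count, countFn_eq_count]
  exact Nat.count_monotone _ (by omega)

lemma nth_le_iff_lt_countFn (hA : A.Infinite) (i m : ℕ) :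
    Nat.nth (· ∈ A) i ≤ m ↔ i < countFn A m := by
  classical
  rw [countFn_eq_count, ← Nat.lt_succ_iff]
  exact (Nat.lt_nth_iff_count_lt (by simpa using hA)).symm

lemma sumFn_eq_mul_countFn_sub_sum (A : Set ℕ) (n : ℕ) :
    sumFn A n = n * countFn A n - ∑ m ∈ range n, (countFn A m : ℝ) := by
  classical
  induction n with
  | zero => simp [sumFn, Set.indicator]
  | succ n ih =>
    rw [sumFn, sum_range_succ, ← sumFn, ih, sum_range_succ, countFn_eq_count A (n + 1),
      Nat.count_succ, ← countFn_eq_count, Set.indicator_apply]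
    by_cases h : n + 1 ∈ A <;> simp [h] <;> ring

lemma countFn_eq_sum_range_ite (hA : A.Infinite) {m K : ℕ} (hK : countFn A m ≤ K) :
    (countFn A m : ℝ) = ∑ i ∈ range K, if Nat.nth (· ∈ A) i ≤ m then 1 else 0 := by
  rw [sum_boole, filter_congr fun i _ => nth_le_iff_lt_countFn hA i m]
  have : (range K).filter (· < countFn A m) = range (countFn A m) := by
    ext i; simp only [mem_filter, mem_range]; omega
  rw [this, card_range]

lemma sum_range_abs_ite_sub_ite_le (a b M : ℕ) :
    ∑ m ∈ range M, |(if a ≤ m then (1 : ℝ) else 0) - if b ≤ m then 1 else 0| ≤ |(a : ℝ) - b| := by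
  calc _ = ∑ m ∈ range M, if m ∈ Ico (min a b) (max a b) then (1 : ℝ) else 0 := by
        refine sum_congr rfl fun m _ => ?_
        simp only [mem_Ico]
        split_ifs <;> simp <;> omega
    _ = #(range M ∩ Ico (min a b) (max a b)) := by rw [sum_boole, filter_mem_eq_inter]
    _ ≤ #(Ico (min a b) (max a b)) := by gcongr; exact inter_subset_right
    _ = |(a : ℝ) - b| := by
        rw [Nat.card_Ico, Nat.cast_sub (min_le_max), Nat.cast_max, Nat.cast_min,
          max_sub_min_eq_abs, abs_sub_comm]

lemma sum_range_abs_countFn_sub_le (hA : A.Infinite) (hB : B.Infinite) (M : ℕ) :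
    ∑ m ∈ range M, |(countFn A m : ℝ) - countFn B m|
      ≤ ∑ i ∈ range (max (countFn A M) (countFn B M)),
          |(Nat.nth (· ∈ A) i : ℝ) - Nat.nth (· ∈ B) i| := by
  set K := max (countFn A M) (countFn B M)
  calc _ ≤ ∑ m ∈ range M, ∑ i ∈ range K, |(if Nat.nth (· ∈ A) i ≤ m then (1 : ℝ) else 0)
          - if Nat.nth (· ∈ B) i ≤ m then 1 else 0| := by
        refine sum_le_sum fun m hm => ?_
        have hmM : m ≤ M := (mem_range.mp hm).le
        rw [countFn_eq_sum_range_ite hA ((countFn_mono A hmM).trans (le_max_left _ _)),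
          countFn_eq_sum_range_ite hB ((countFn_mono B hmM).trans (le_max_right _ _)),
          ← sum_sub_distrib]
        exact abs_sum_le_sum_abs _ _
    _ = ∑ i ∈ range K, ∑ m ∈ range M, |(if Nat.nth (· ∈ A) i ≤ m then (1 : ℝ) else 0)
          - if Nat.nth (· ∈ B) i ≤ m then 1 else 0| := sum_comm
    _ ≤ _ := sum_le_sum fun i _ => sum_range_abs_ite_sub_ite_le _ _ M

lemma le_two_mul_of_abs_sub_le_half_rpow {a b : ℕ} {γ : ℝ} (hγ : γ ≤ 1)
    (h : |(a : ℝ) - b| ≤ 1 / 2 * (a : ℝ) ^ γ) : (a : ℝ) ≤ 2 * b := by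
  rcases Nat.eq_zero_or_pos a with rfl | ha
  · simp
  · have haγ : (a : ℝ) ^ γ ≤ a := by
      simpa using Real.rpow_le_rpow_of_exponent_le (by exact_mod_cast ha : (1 : ℝ) ≤ a) hγ
    linarith [le_abs_self ((a : ℝ) - b)]

theorem isLittleO_sum_range_abs_countFn_sub (hA : A.Infinite) (hB : B.Infinite) {β γ c : ℝ}
    (hγ0 : 0 < γ) (hγ1 : γ ≤ 1) (hβγ : 0 < β + γ) (hc : 0 < c)
    (hnth : (fun i : ℕ => (Nat.nth (· ∈ A) i : ℝ) - Nat.nth (· ∈ B) i)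
      =o[atTop] fun i : ℕ => (Nat.nth (· ∈ A) i : ℝ) ^ γ)
    (hcount : ∀ n : ℕ,
      (countFn A n : ℝ) ≤ c * (n : ℝ) ^ β ∧ (countFn B n : ℝ) ≤ c * (n : ℝ) ^ β) :
    (fun M : ℕ => ∑ m ∈ range M, |(countFn A m : ℝ) - countFn B m|)
      =o[atTop] fun M : ℕ => (M : ℝ) ^ (β + γ) := by
  refine isLittleO_of_forall_exists_le_add (tendsto_natCast_rpow_atTop hβγ) fun δ hδ => ?_
  set a : ℕ → ℕ := Nat.nth (· ∈ A)
  set b : ℕ → ℕ := Nat.nth (· ∈ B)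
  set η := min (1 / 2) (δ / (c * 2 ^ γ))
  have hη : 0 < η := lt_min (by norm_num) (by positivity)
  obtain ⟨I₀, hI₀⟩ := eventually_atTop.mp (hnth.def hη)
  refine ⟨∑ i ∈ range I₀, |(a i : ℝ) - b i|, Eventually.of_forall fun M => ?_⟩
  set K := max (countFn A M) (countFn B M)
  -- `a i ≤ 2 b i` for `i ≥ I₀`, and `i < K` means `a i ≤ M` or `b i ≤ M`
  have hclose : ∀ i, I₀ ≤ i → i < K → |(a i : ℝ) - b i| ≤ η * (2 * M) ^ γ := by
    intro i hi hiK
    have hi' := hI₀ i hi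
    rw [Real.norm_eq_abs, Real.norm_of_nonneg (Real.rpow_nonneg (Nat.cast_nonneg _) _)] at hi'
    have hab : (a i : ℝ) ≤ 2 * b i :=
      le_two_mul_of_abs_sub_le_half_rpow hγ1 (hi'.trans (by gcongr; exact min_le_left _ _))
    have haM : (a i : ℝ) ≤ 2 * M := by
      rcases lt_max_iff.mp hiK with h | h
      · have : a i ≤ M := (nth_le_iff_lt_countFn hA i M).mpr h
        have : (a i : ℝ) ≤ M := by exact_mod_cast this
        linarith [M.cast_nonneg (α := ℝ)]
      · have : b i ≤ M := (nth_le_iff_lt_countFn hB i M).mpr h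
        have : (b i : ℝ) ≤ M := by exact_mod_cast this
        linarith
    exact hi'.trans (by gcongr)
  have hK : (K : ℝ) ≤ c * (M : ℝ) ^ β := by
    rcases max_choice (countFn A M) (countFn B M) with h | h <;> simp only [K, h]
    exacts [(hcount M).1, (hcount M).2]
  have hηc : η * (c * 2 ^ γ) ≤ δ := (le_div_iff₀ (by positivity)).mp (min_le_right _ _)
  rw [Real.norm_of_nonneg (sum_nonneg fun m _ => abs_nonneg _)]
  calc _ ≤ ∑ i ∈ range K, |(a i : ℝ) - b i| := sum_range_abs_countFn_sub_le hA hB M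
    _ ≤ ∑ i ∈ range I₀, |(a i : ℝ) - b i| + ∑ i ∈ range K, η * (2 * (M : ℝ)) ^ γ :=
        sum_range_le_sum_range_add_sum_range (fun _ => abs_nonneg _) (fun _ => by positivity)
          hclose
    _ = ∑ i ∈ range I₀, |(a i : ℝ) - b i| + K * (η * (2 * (M : ℝ)) ^ γ) := by
        rw [sum_const, card_range, nsmul_eq_mul]
    _ ≤ ∑ i ∈ range I₀, |(a i : ℝ) - b i| + c * (M : ℝ) ^ β * (η * (2 * (M : ℝ)) ^ γ) := by
        gcongr
    _ = ∑ i ∈ range I₀, |(a i : ℝ) - b i| + η * (c * 2 ^ γ) * (M : ℝ) ^ (β + γ) := by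
        rw [Real.mul_rpow (by norm_num) M.cast_nonneg, Real.rpow_add' M.cast_nonneg hβγ.ne']
        ring
    _ ≤ _ := by gcongr

lemma sq_sumFn_sub_sumFn_le (A B : Set ℕ) (n : ℕ) :
    (sumFn A n - sumFn B n) ^ 2 ≤ 2 * ((n : ℝ) ^ 2 * ((countFn A n : ℝ) - countFn B n) ^ 2)
      + 2 * (∑ m ∈ range n, |(countFn A m : ℝ) - countFn B m|) ^ 2 := by
  have hT : |∑ m ∈ range n, ((countFn A m : ℝ) - countFn B m)|
      ≤ ∑ m ∈ range n, |(countFn A m : ℝ) - countFn B m| := abs_sum_le_sum_abs _ _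
  rw [sumFn_eq_mul_countFn_sub_sum, sumFn_eq_mul_countFn_sub_sum,
    show ∀ x y z w : ℝ, x - y - (z - w) = (x - z) - (y - w) by intros; ring, ← sum_sub_distrib,
    ← mul_sub]
  set y := ∑ m ∈ range n, ((countFn A m : ℝ) - countFn B m)
  nlinarith [sq_abs y, abs_nonneg y, sq_nonneg ((n : ℝ) * ((countFn A n : ℝ) - countFn B n) + y)]

lemma sum_range_mul_sq_sumFn_sub_le (A B : Set ℕ) {w : ℕ → ℝ} (hw : ∀ n, 0 ≤ w n) (M : ℕ) :
    ∑ n ∈ range M, w n * (sumFn A n - sumFn B n) ^ 2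
      ≤ 2 * ∑ n ∈ range M, (n : ℝ) ^ 2 * w n * ((countFn A n : ℝ) - countFn B n) ^ 2
        + 2 * ∑ n ∈ range M, w n * (∑ m ∈ range n, |(countFn A m : ℝ) - countFn B m|) ^ 2 := by
  rw [mul_sum, mul_sum, ← sum_add_distrib]
  refine sum_le_sum fun n _ => ?_
  linear_combination mul_le_mul_of_nonneg_left (sq_sumFn_sub_sumFn_le A B n) (hw n)

end Counting

theorem stmt5 (β α : ℝ) (hβ0 : 0 < β) (hβ1 : β ≤ 1 / 2)
    (hα0 : 0 ≤ α) (hα1 : α ≤ β / 2)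
    (A B : Set ℕ) (hA : A.Infinite) (hB : B.Infinite)
    (h1 : (fun i : ℕ => (Nat.nth (· ∈ A) i : ℝ) - (Nat.nth (· ∈ B) i : ℝ))
      =o[atTop] fun i : ℕ => (Nat.nth (· ∈ A) i : ℝ) ^ (β - α))
    (h2 : (fun n : ℕ => (countFn A n : ℝ) - (countFn B n : ℝ))
      =O[atTop] fun n : ℕ => (n : ℝ) ^ α)
    (h3 : ∃ c : ℝ, 0 < c ∧ ∀ n : ℕ,
      (countFn A n : ℝ) ≤ c * (n : ℝ) ^ β ∧ (countFn B n : ℝ) ≤ c * (n : ℝ) ^ β) :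
    (fun N : ℕ => ∑' n : ℕ, (1 - 1 / (N : ℝ)) ^ (2 * n) * (sumFn A n - sumFn B n) ^ 2)
      =o[atTop] fun N : ℕ => (N : ℝ) ^ (2 + 2 * β) := by
  obtain ⟨c, hc, hcount⟩ := h3
  set S : ℕ → ℝ := fun M => ∑ m ∈ range M, |(countFn A m : ℝ) - countFn B m|
  have hS : S =o[atTop] fun M : ℕ => (M : ℝ) ^ (β + (β - α)) :=
    isLittleO_sum_range_abs_countFn_sub hA hB (by linarith) (by linarith) (by linarith) hc h1
      hcount
  have hd := isLittleO_sum_range_sq hα0 (by linarith) h2 hS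
  have hS2 := isLittleO_sum_range_sq_sum_range_abs hS
  refine isLittleO_iff.mpr fun ε hε => ?_
  filter_upwards [tendsto_natCast_atTop_atTop.eventually <| eventually_sum_range_rpow_mul_le
      (fun n => sq_nonneg _) (k := 2) zero_le_two (by linarith) hd (ε := ε / 4) (by positivity),
    tendsto_natCast_atTop_atTop.eventually <| eventually_sum_range_rpow_mul_le
      (fun n => sq_nonneg _) (k := 0) le_rfl (by linarith) hS2 (ε := ε / 4) (by positivity),
    eventually_ge_atTop 1] with N hdN hSN hN
  simp only [Real.rpow_two, Real.rpow_zero, one_mul] at hdN hSN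
  have hN1 : (1 : ℝ) ≤ N := by exact_mod_cast hN
  have hw : ∀ n, 0 ≤ (1 - 1 / (N : ℝ)) ^ (2 * n) :=
    fun n => pow_nonneg (one_sub_one_div_nonneg hN1) _
  have hterm : ∀ n, 0 ≤ (1 - 1 / (N : ℝ)) ^ (2 * n) * (sumFn A n - sumFn B n) ^ 2 :=
    fun n => mul_nonneg (hw n) (sq_nonneg _)
  rw [Real.norm_of_nonneg (tsum_nonneg hterm), Real.norm_of_nonneg (by positivity)]
  refine Real.tsum_le_of_sum_range_le hterm fun M => ?_
  have hexp : (N : ℝ) ^ ((0 : ℝ) + ((β + (β - α)) * 2 + 1)) ≤ (N : ℝ) ^ (2 + 2 * β) :=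
    Real.rpow_le_rpow_of_exponent_le hN1 (by linarith)
  calc _ ≤ _ := sum_range_mul_sq_sumFn_sub_le A B hw M
    _ ≤ 2 * (ε / 4 * (N : ℝ) ^ (2 + (α + (β + (β - α)))))
        + 2 * (ε / 4 * (N : ℝ) ^ ((0 : ℝ) + ((β + (β - α)) * 2 + 1))) := by
        gcongr
        exacts [hdN M, hSN M]
    _ ≤ ε * (N : ℝ) ^ (2 + 2 * β) := by
        rw [show 2 + (α + (β + (β - α))) = 2 + 2 * β by ring]
        linarith [mul_le_mul_of_nonneg_left hexp hε.le]
end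

section
/- Let c > 0 be a real number and let f : ℕ → ℝ be a nonnegative function such that Σ_{n ≤ x} f(n) = o(x^{c}) as x → ∞. Then, as the integer N → ∞, Σ_{n=0}^{∞} f(n)·(1 − 1/N)^{2n} = o(N^{c}). -/
open Filter Asymptotics

theorem stmt12 (c : ℝ) (hc : 0 < c) (f : ℕ → ℝ) (hf : ∀ n, 0 ≤ f n)
    (h : (fun x : ℕ => ∑ n ∈ Finset.range (x + 1), f n)
      =o[atTop] fun x : ℕ => (x : ℝ) ^ c) :
    (fun N : ℕ => ∑' n : ℕ, f n * (1 - 1 / (N : ℝ)) ^ (2 * n))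
      =o[atTop] fun N : ℕ => (N : ℝ) ^ c := by
  set S : ℕ → ℝ := fun x => ∑ n ∈ Finset.range (x + 1), f n with hSdef
  have hSnonneg : ∀ x, 0 ≤ S x := fun x => Finset.sum_nonneg fun i _ => hf i
  set m : ℕ := ⌈c⌉₊ with hm
  set q : ℝ := Real.exp (-2) with hqdef
  have hq0 : 0 < q := Real.exp_pos _
  have hq1 : q < 1 := by
    rw [hqdef, Real.exp_lt_one_iff]; norm_num
  -- summability of the majorant series
  have hA : Summable (fun k : ℕ => ((k : ℝ) + 1) ^ m * q ^ k) := by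
    have h1 : Summable (fun k : ℕ => (k : ℝ) ^ m * q ^ k) :=
      summable_pow_mul_geometric_of_norm_lt_one m
        (by rw [Real.norm_eq_abs, abs_of_pos hq0]; exact hq1)
    have h2 : Summable (fun k : ℕ => ((k : ℝ) + 1) ^ m * q ^ (k + 1)) := by
      have := (summable_nat_add_iff 1).2 h1
      refine this.congr fun k => ?_
      push_cast
      ring
    have h3 := h2.mul_right q⁻¹
    refine h3.congr fun k => ?_
    rw [pow_succ]
    field_simp
  set C : ℝ := ∑' k : ℕ, ((k : ℝ) + 1) ^ m * q ^ k with hC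
  have hC1 : (1 : ℝ) ≤ C := by
    have := Summable.le_tsum hA 0 (fun i _ => by positivity)
    simpa using this
  have hC0 : (0 : ℝ) < C := lt_of_lt_of_le one_pos hC1
  rw [isLittleO_iff]
  intro ε hε
  have hε' : 0 < ε / C := div_pos hε hC0
  obtain ⟨x₀, hx₀⟩ := (h.def hε').exists_forall_of_atTop
  filter_upwards [eventually_ge_atTop (max x₀ 1)] with N hN
  have hN1 : 1 ≤ N := le_trans (le_max_right _ _) hN
  have hNx₀ : x₀ ≤ N := le_trans (le_max_left _ _) hN
  have hN1R : (1 : ℝ) ≤ (N : ℝ) := by exact_mod_cast hN1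
  have hNpos : (0 : ℝ) < (N : ℝ) := lt_of_lt_of_le one_pos hN1R
  set r : ℝ := (1 - 1 / (N : ℝ)) ^ 2 with hrdef
  have hb0 : (0 : ℝ) ≤ 1 - 1 / (N : ℝ) := by
    have : 1 / (N : ℝ) ≤ 1 := by
      rw [div_le_one hNpos]; exact hN1R
    linarith
  have hr0 : (0 : ℝ) ≤ r := by positivity
  have hr1 : r ≤ 1 := by
    have : 1 - 1 / (N : ℝ) ≤ 1 := by
      have : (0:ℝ) ≤ 1 / (N : ℝ) := by positivity
      linarith
    calc r ≤ 1 ^ 2 := pow_le_pow_left₀ hb0 this 2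
    _ = 1 := one_pow 2
  -- r ^ N ≤ q
  have hrN : r ^ N ≤ q := by
    have hle : 1 - 1 / (N : ℝ) ≤ Real.exp (-(1 / (N : ℝ))) := by
      have := Real.add_one_le_exp (-(1 / (N : ℝ)))
      linarith
    have h2 : r ≤ Real.exp (-(1 / (N : ℝ))) ^ 2 := pow_le_pow_left₀ hb0 hle 2
    have h3 : r ^ N ≤ (Real.exp (-(1 / (N : ℝ))) ^ 2) ^ N :=
      pow_le_pow_left₀ hr0 h2 N
    calc r ^ N ≤ (Real.exp (-(1 / (N : ℝ))) ^ 2) ^ N := h3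
      _ = Real.exp ((-(1 / (N : ℝ))) * (2 * N)) := by
          rw [← Real.exp_nat_mul, ← Real.exp_nat_mul]
          ring_nf
      _ = q := by
          rw [hqdef]
          congr 1
          field_simp
  -- the per-x smallness of S
  have hSsmall : ∀ x : ℕ, x₀ ≤ x → S x ≤ ε / C * (x : ℝ) ^ c := by
    intro x hx
    have := hx₀ x hx
    rwa [Real.norm_of_nonneg (hSnonneg x),
      Real.norm_of_nonneg (Real.rpow_nonneg (Nat.cast_nonneg x) c)] at this
  -- key block estimate
  have key : ∀ K : ℕ, ∑ i ∈ Finset.range (K * N), f i * r ^ i ≤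
      ∑ k ∈ Finset.range K, q ^ k * S ((k + 1) * N) := by
    intro K
    induction K with
    | zero => simp
    | succ K ih =>
      rw [Nat.succ_mul, Finset.sum_range_add, Finset.sum_range_succ]
      refine add_le_add ih ?_
      have step1 : ∀ j ∈ Finset.range N, f (K * N + j) * r ^ (K * N + j) ≤
          r ^ (K * N) * f (K * N + j) := by
        intro j _
        rw [pow_add]
        have : r ^ j ≤ 1 := pow_le_one₀ hr0 hr1
        calc f (K * N + j) * (r ^ (K * N) * r ^ j)
            ≤ f (K * N + j) * (r ^ (K * N) * 1) := by
              apply mul_le_mul_of_nonneg_left _ (hf _)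
              exact mul_le_mul_of_nonneg_left this (by positivity)
          _ = r ^ (K * N) * f (K * N + j) := by ring
      calc ∑ j ∈ Finset.range N, f (K * N + j) * r ^ (K * N + j)
          ≤ ∑ j ∈ Finset.range N, r ^ (K * N) * f (K * N + j) :=
            Finset.sum_le_sum step1
        _ = r ^ (K * N) * ∑ j ∈ Finset.range N, f (K * N + j) := by
            rw [Finset.mul_sum]
        _ ≤ q ^ K * S ((K + 1) * N) := by
            apply mul_le_mul
            · rw [mul_comm K N, pow_mul]
              exact pow_le_pow_left₀ (by positivity) hrN K
            · -- ∑ j ∈ range N, f (K*N + j) ≤ S ((K+1)*N)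
              have : ∑ j ∈ Finset.range N, f (K * N + j)
                  = ∑ i ∈ Finset.Ico (K * N) (K * N + N), f i := by
                rw [Finset.sum_Ico_eq_sum_range]
                simp
              rw [this, hSdef]
              apply Finset.sum_le_sum_of_subset_of_nonneg
              · intro i hi
                rw [Finset.mem_Ico] at hi
                rw [Finset.mem_range, Nat.succ_mul]
                omega
              · intro i _ _
                exact hf _
            · exact Finset.sum_nonneg fun i _ => hf _
            · positivity
  -- bound each term q^k * S((k+1)*N)
  have term_bound : ∀ k : ℕ, q ^ k * S ((k + 1) * N) ≤
      ε / C * (N : ℝ) ^ c * (((k : ℝ) + 1) ^ m * q ^ k) := by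
    intro k
    have hx : x₀ ≤ (k + 1) * N := le_trans hNx₀ (by nlinarith [Nat.le_mul_of_pos_left N (Nat.succ_pos k)])
    have h1 : S ((k + 1) * N) ≤ ε / C * (((k + 1) * N : ℕ) : ℝ) ^ c := hSsmall _ hx
    have hcast : (((k + 1) * N : ℕ) : ℝ) = ((k : ℝ) + 1) * (N : ℝ) := by push_cast; ring
    have h2 : (((k + 1) * N : ℕ) : ℝ) ^ c = ((k : ℝ) + 1) ^ c * (N : ℝ) ^ c := by
      rw [hcast, Real.mul_rpow (by positivity) (by positivity)]
    have h3 : ((k : ℝ) + 1) ^ c ≤ ((k : ℝ) + 1) ^ m := by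
      rw [← Real.rpow_natCast ((k : ℝ) + 1) m]
      apply Real.rpow_le_rpow_of_exponent_le (by linarith [Nat.cast_nonneg (α := ℝ) k])
      exact_mod_cast Nat.le_ceil c
    have h4 : S ((k + 1) * N) ≤ ε / C * (((k : ℝ) + 1) ^ m * (N : ℝ) ^ c) := by
      rw [h2] at h1
      calc S ((k + 1) * N) ≤ ε / C * (((k : ℝ) + 1) ^ c * (N : ℝ) ^ c) := h1
        _ ≤ ε / C * (((k : ℝ) + 1) ^ m * (N : ℝ) ^ c) := by
            apply mul_le_mul_of_nonneg_left _ (le_of_lt hε')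
            apply mul_le_mul_of_nonneg_right h3 (Real.rpow_nonneg (le_of_lt hNpos) c)
    calc q ^ k * S ((k + 1) * N)
        ≤ q ^ k * (ε / C * (((k : ℝ) + 1) ^ m * (N : ℝ) ^ c)) :=
          mul_le_mul_of_nonneg_left h4 (by positivity)
      _ = ε / C * (N : ℝ) ^ c * (((k : ℝ) + 1) ^ m * q ^ k) := by ring
  -- partial sums of the series are bounded
  have partial_bound : ∀ n : ℕ, ∑ i ∈ Finset.range n, f i * r ^ i ≤
      ε / C * (N : ℝ) ^ c * C := by
    intro n
    have h1 : ∑ i ∈ Finset.range n, f i * r ^ i ≤ ∑ i ∈ Finset.range (n * N), f i * r ^ i := by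
      apply Finset.sum_le_sum_of_subset_of_nonneg
      · apply Finset.range_subset_range.2
        exact Nat.le_mul_of_pos_right n (by omega)
      · intro i _ _
        exact mul_nonneg (hf i) (by positivity)
    have h2 := key n
    have h3 : ∑ k ∈ Finset.range n, q ^ k * S ((k + 1) * N) ≤
        ∑ k ∈ Finset.range n, ε / C * (N : ℝ) ^ c * (((k : ℝ) + 1) ^ m * q ^ k) :=
      Finset.sum_le_sum fun k _ => term_bound k
    have h4 : ∑ k ∈ Finset.range n, ε / C * (N : ℝ) ^ c * (((k : ℝ) + 1) ^ m * q ^ k)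
        = ε / C * (N : ℝ) ^ c * ∑ k ∈ Finset.range n, ((k : ℝ) + 1) ^ m * q ^ k := by
      rw [Finset.mul_sum]
    have h5 : ∑ k ∈ Finset.range n, ((k : ℝ) + 1) ^ m * q ^ k ≤ C :=
      Summable.sum_le_tsum _ (fun i _ => by positivity) hA
    calc ∑ i ∈ Finset.range n, f i * r ^ i
        ≤ ∑ k ∈ Finset.range n, q ^ k * S ((k + 1) * N) := le_trans h1 h2
      _ ≤ ε / C * (N : ℝ) ^ c * ∑ k ∈ Finset.range n, ((k : ℝ) + 1) ^ m * q ^ k := by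
          rw [← h4]; exact h3
      _ ≤ ε / C * (N : ℝ) ^ c * C :=
          mul_le_mul_of_nonneg_left h5
            (mul_nonneg (le_of_lt hε') (Real.rpow_nonneg (Nat.cast_nonneg N) c))
  -- conclude
  have hterm_nonneg : ∀ i : ℕ, 0 ≤ f i * r ^ i := fun i => mul_nonneg (hf i) (by positivity)
  have hfun : (fun n : ℕ => f n * (1 - 1 / (N : ℝ)) ^ (2 * n)) = fun n => f n * r ^ n := by
    funext n
    rw [hrdef, ← pow_mul]
  have htsum : ∑' n : ℕ, f n * (1 - 1 / (N : ℝ)) ^ (2 * n) ≤ ε / C * (N : ℝ) ^ c * C := by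
    rw [hfun]
    exact Real.tsum_le_of_sum_range_le hterm_nonneg partial_bound
  have htsum_nonneg : 0 ≤ ∑' n : ℕ, f n * (1 - 1 / (N : ℝ)) ^ (2 * n) := by
    apply tsum_nonneg
    intro i
    exact mul_nonneg (hf i) (by positivity)
  rw [Real.norm_of_nonneg htsum_nonneg,
    Real.norm_of_nonneg (Real.rpow_nonneg (Nat.cast_nonneg N) c)]
  calc ∑' n : ℕ, f n * (1 - 1 / (N : ℝ)) ^ (2 * n) ≤ ε / C * (N : ℝ) ^ c * C := htsum
    _ = ε * (N : ℝ) ^ c := by field_simp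
end

section
/- Let c > 0 be a real number and let f : ℕ → ℝ be a nonnegative function such that Σ_{n ≤ x} f(n) = o(x^{c}) as x → ∞. Then, as the integer N → ∞, Σ_{n=0}^{∞} n^2·f(n)·(1 − 1/N)^{2n} = o(N^{c+2}). -/
open Filter Asymptotics

lemma aux_summable13 (m : ℕ) {r : ℝ} (h0 : 0 < r) (h1 : r < 1) :
    Summable (fun k : ℕ => ((k : ℝ) + 1) ^ m * r ^ k) := by
  have hr : ‖r‖ < 1 := by rwa [Real.norm_eq_abs, abs_of_pos h0]
  have h2 : Summable (fun n : ℕ => ((n : ℝ)) ^ m * r ^ n) :=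
    summable_pow_mul_geometric_of_norm_lt_one m hr
  have h3 : Summable (fun n : ℕ => (((n + 1 : ℕ) : ℝ)) ^ m * r ^ (n + 1)) :=
    (summable_nat_add_iff 1).mpr h2
  have h4 := h3.mul_left r⁻¹
  refine h4.congr fun n => ?_
  have : r ≠ 0 := ne_of_gt h0
  push_cast
  rw [pow_succ]
  field_simp

set_option maxHeartbeats 1000000 in
theorem stmt13 (c : ℝ) (hc : 0 < c) (f : ℕ → ℝ) (hf : ∀ n, 0 ≤ f n)
    (h : (fun x : ℕ => ∑ n ∈ Finset.range (x + 1), f n)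
      =o[atTop] fun x : ℕ => (x : ℝ) ^ c) :
    (fun N : ℕ => ∑' n : ℕ, (n : ℝ) ^ 2 * f n * (1 - 1 / (N : ℝ)) ^ (2 * n))
      =o[atTop] fun N : ℕ => (N : ℝ) ^ (c + 2) := by
  set S : ℕ → ℝ := fun x => ∑ n ∈ Finset.range (x + 1), f n with hS
  have hSnonneg : ∀ x, 0 ≤ S x := fun x => Finset.sum_nonneg fun i _ => hf i
  have hfS : ∀ n, f n ≤ S n := fun n =>
    Finset.single_le_sum (fun i _ => hf i) (Finset.self_mem_range_succ n)
  have hSmono : Monotone S := by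
    intro x y hxy
    exact Finset.sum_le_sum_of_subset_of_nonneg
      (Finset.range_subset_range.2 (by omega)) (fun i _ _ => hf i)
  set p : ℕ := ⌈c⌉₊ with hp
  have hcp : c ≤ (p : ℝ) := Nat.le_ceil c
  set m : ℕ := p + 2 with hm
  set s : ℝ := Real.exp (-2) with hs
  have hs0 : 0 < s := Real.exp_pos _
  have hs1 : s < 1 := Real.exp_lt_one_iff.mpr (by norm_num)
  set K : ℝ := ∑' k : ℕ, ((k : ℝ) + 1) ^ m * s ^ k with hK
  have hKsum : Summable (fun k : ℕ => ((k : ℝ) + 1) ^ m * s ^ k) :=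
    aux_summable13 m hs0 hs1
  have hK1 : (1 : ℝ) ≤ K := by
    have := Summable.le_tsum hKsum 0 (fun i _ => by positivity)
    simpa using this
  have hK0 : 0 < K := lt_of_lt_of_le one_pos hK1
  rw [isLittleO_iff]
  intro ε hε
  set ε' : ℝ := ε / K with hε'
  have hε'0 : 0 < ε' := div_pos hε hK0
  have hSc := (isLittleO_iff.mp h) hε'0
  rw [eventually_atTop] at hSc
  obtain ⟨M, hM⟩ := hSc
  have hSbound : ∀ x : ℕ, M ≤ x → S x ≤ ε' * (x : ℝ) ^ c := by
    intro x hx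
    have := hM x hx
    rw [Real.norm_eq_abs, Real.norm_eq_abs, abs_of_nonneg (hSnonneg x),
      abs_of_nonneg (Real.rpow_nonneg (Nat.cast_nonneg x) c)] at this
    exact this
  set C : ℝ := S M + ε' with hCdef
  have hC0 : 0 ≤ C := add_nonneg (hSnonneg M) hε'0.le
  have hfC : ∀ n : ℕ, f n ≤ C * ((n : ℝ) + 1) ^ p := by
    intro n
    have h1p : (1 : ℝ) ≤ ((n : ℝ) + 1) ^ p := one_le_pow₀ (by linarith [Nat.cast_nonneg (α := ℝ) n])
    rcases le_or_gt M n with hn | hn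
    · have h1 : S n ≤ ε' * (n : ℝ) ^ c := hSbound n hn
      have h2 : (n : ℝ) ^ c ≤ ((n : ℝ) + 1) ^ p := by
        calc (n : ℝ) ^ c ≤ ((n : ℝ) + 1) ^ c :=
              Real.rpow_le_rpow (Nat.cast_nonneg n) (by linarith) hc.le
          _ ≤ ((n : ℝ) + 1) ^ (p : ℝ) :=
              Real.rpow_le_rpow_of_exponent_le (by linarith [Nat.cast_nonneg (α := ℝ) n]) hcp
          _ = ((n : ℝ) + 1) ^ p := Real.rpow_natCast _ p
      calc f n ≤ S n := hfS n
        _ ≤ ε' * ((n : ℝ) + 1) ^ p := le_trans h1 (by nlinarith)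
        _ ≤ C * ((n : ℝ) + 1) ^ p := by
            apply mul_le_mul_of_nonneg_right _ (by positivity)
            simp [hCdef]; linarith [hSnonneg M]
    · calc f n ≤ S n := hfS n
        _ ≤ S M := hSmono hn.le
        _ ≤ S M * ((n : ℝ) + 1) ^ p := le_mul_of_one_le_right (hSnonneg M) h1p
        _ ≤ C * ((n : ℝ) + 1) ^ p := by
            apply mul_le_mul_of_nonneg_right _ (by positivity)
            simp [hCdef]; linarith
  rw [eventually_atTop]
  refine ⟨max M 2, fun N hN => ?_⟩
  have hNM : M ≤ N := le_trans (le_max_left _ _) hN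
  have hN2 : 2 ≤ N := le_trans (le_max_right _ _) hN
  have hN0 : (0 : ℝ) < N := by positivity
  haveI : NeZero N := ⟨by omega⟩
  set q : ℝ := 1 - 1 / (N : ℝ) with hqdef
  have hNinv : 1 / (N : ℝ) ≤ 1 / 2 := by
    apply one_div_le_one_div_of_le <;> [norm_num; exact_mod_cast hN2]
  have hq0 : 0 < q := by rw [hqdef]; linarith
  have hq1 : q < 1 := by
    rw [hqdef]
    have : 0 < 1 / (N : ℝ) := by positivity
    linarith
  set r : ℝ := q ^ 2 with hrdef
  have hr0 : 0 < r := by positivity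
  have hr1 : r < 1 := by
    calc r = q * q := sq q
      _ < 1 * 1 := by apply mul_lt_mul' hq1.le hq1 hq0.le one_pos
      _ = 1 := by norm_num
  -- key exponential bound : r ^ N ≤ s
  have hqexp : q ≤ Real.exp (-1 / (N : ℝ)) := by
    have h1 := Real.add_one_le_exp (-1 / (N : ℝ))
    have h2 : (-1 : ℝ) / N = -(1 / (N : ℝ)) := by ring
    rw [hqdef]; linarith
  have hrNs : r ^ N ≤ s := by
    have h1 : q ^ N ≤ Real.exp (-1 / (N : ℝ)) ^ N := pow_le_pow_left₀ hq0.le hqexp N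
    have h2 : Real.exp (-1 / (N : ℝ)) ^ N = Real.exp (-1) := by
      rw [← Real.exp_nat_mul]
      congr 1
      field_simp
    have h3 : q ^ N ≤ Real.exp (-1) := h2 ▸ h1
    have h4 : r ^ N = (q ^ N) ^ 2 := by rw [hrdef, ← pow_mul, ← pow_mul, Nat.mul_comm]
    rw [h4, hs]
    calc (q ^ N) ^ 2 ≤ Real.exp (-1) ^ 2 := pow_le_pow_left₀ (by positivity) h3 2
      _ = Real.exp (-2) := by rw [← Real.exp_nat_mul]; norm_num
  set a : ℕ → ℝ := fun n => (n : ℝ) ^ 2 * f n * r ^ n with ha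
  have ha0 : ∀ n, 0 ≤ a n := fun n => by
    have := hf n; positivity
  have ha_le : ∀ n, a n ≤ C * (((n : ℝ) + 1) ^ m * r ^ n) := by
    intro n
    have h1 : (n : ℝ) ^ 2 ≤ ((n : ℝ) + 1) ^ 2 := by nlinarith [Nat.cast_nonneg (α := ℝ) n]
    calc a n = (n : ℝ) ^ 2 * f n * r ^ n := rfl
      _ ≤ ((n : ℝ) + 1) ^ 2 * (C * ((n : ℝ) + 1) ^ p) * r ^ n := by
          apply mul_le_mul_of_nonneg_right _ (by positivity)
          exact mul_le_mul h1 (hfC n) (hf n) (by positivity)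
      _ = C * (((n : ℝ) + 1) ^ m * r ^ n) := by rw [hm, pow_add]; ring
  have hsum_a : Summable a :=
    Summable.of_nonneg_of_le ha0 ha_le ((aux_summable13 m hr0 hr1).mul_left C)
  set e : ℕ × Fin N ≃ ℕ := (Nat.divModEquiv N).symm with he
  have ha2 : Summable (a ∘ e) := e.summable_iff.mpr hsum_a
  -- block bound
  set E : ℝ := ε' * (N : ℝ) ^ (c + 2) with hE
  have hE0 : 0 ≤ E := by positivity
  have hblock : ∀ k : ℕ, (∑ j ∈ Finset.range N, a (k * N + j)) ≤
      E * (((k : ℝ) + 1) ^ m * s ^ k) := by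
    intro k
    have hkN : M ≤ k * N + N := le_trans hNM (Nat.le_add_left N (k * N))
    have hfsum : (∑ j ∈ Finset.range N, f (k * N + j)) ≤ ε' * ((k * N + N : ℕ) : ℝ) ^ c := by
      have h1 : (∑ j ∈ Finset.range N, f (k * N + j)) =
          ∑ i ∈ Finset.Ico (k * N) (k * N + N), f i := by
        rw [Finset.sum_Ico_eq_sum_range]
        have hNN : k * N + N - k * N = N := by omega
        rw [hNN]
      have h2 : (∑ i ∈ Finset.Ico (k * N) (k * N + N), f i) ≤ S (k * N + N) := by
        apply Finset.sum_le_sum_of_subset_of_nonneg _ (fun i _ _ => hf i)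
        intro i hi
        simp only [Finset.mem_Ico] at hi
        simp only [Finset.mem_range]
        omega
      rw [h1]
      exact le_trans h2 (hSbound _ hkN)
    have hstep : ∀ j ∈ Finset.range N,
        a (k * N + j) ≤ (((k : ℝ) + 1) * N) ^ 2 * r ^ (k * N) * f (k * N + j) := by
      intro j hj
      simp only [Finset.mem_range] at hj
      have hn2 : ((k * N + j : ℕ) : ℝ) ^ 2 ≤ (((k : ℝ) + 1) * N) ^ 2 := by
        apply pow_le_pow_left₀ (by positivity)
        push_cast
        have hjN : (j : ℝ) ≤ N := by exact_mod_cast hj.le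
        nlinarith [Nat.cast_nonneg (α := ℝ) k, Nat.cast_nonneg (α := ℝ) j]
      have hrpow : r ^ (k * N + j) ≤ r ^ (k * N) :=
        pow_le_pow_of_le_one hr0.le hr1.le (by omega)
      calc a (k * N + j) = ((k * N + j : ℕ) : ℝ) ^ 2 * f (k * N + j) * r ^ (k * N + j) := rfl
        _ ≤ (((k : ℝ) + 1) * N) ^ 2 * f (k * N + j) * r ^ (k * N) := by
            exact mul_le_mul (mul_le_mul_of_nonneg_right hn2 (hf _)) hrpow
              (pow_nonneg hr0.le _) (mul_nonneg (by positivity) (hf _))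
        _ = (((k : ℝ) + 1) * N) ^ 2 * r ^ (k * N) * f (k * N + j) := by ring
    calc (∑ j ∈ Finset.range N, a (k * N + j))
        ≤ ∑ j ∈ Finset.range N, (((k : ℝ) + 1) * N) ^ 2 * r ^ (k * N) * f (k * N + j) :=
          Finset.sum_le_sum hstep
      _ = (((k : ℝ) + 1) * N) ^ 2 * r ^ (k * N) * ∑ j ∈ Finset.range N, f (k * N + j) := by
          rw [Finset.mul_sum]
      _ ≤ (((k : ℝ) + 1) * N) ^ 2 * r ^ (k * N) * (ε' * ((k * N + N : ℕ) : ℝ) ^ c) := by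
          apply mul_le_mul_of_nonneg_left hfsum (by positivity)
      _ ≤ E * (((k : ℝ) + 1) ^ m * s ^ k) := by
          have hcast : ((k * N + N : ℕ) : ℝ) = ((k : ℝ) + 1) * N := by push_cast; ring
          rw [hcast]
          rw [Real.mul_rpow (by positivity) hN0.le]
          have hk1 : (0 : ℝ) ≤ (k : ℝ) + 1 := by positivity
          have hrk : r ^ (k * N) = (r ^ N) ^ k := by rw [Nat.mul_comm k N]; exact pow_mul r N k
          have hrs : (r ^ N) ^ k ≤ s ^ k := pow_le_pow_left₀ (by positivity) hrNs k
          have hmul : (((k : ℝ) + 1) * N) ^ c = ((k : ℝ) + 1) ^ c * (N : ℝ) ^ c :=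
            Real.mul_rpow hk1 hN0.le
          have hkc : ((k : ℝ) + 1) ^ 2 * ((k : ℝ) + 1) ^ c ≤ ((k : ℝ) + 1) ^ m := by
            have e1 : ((k : ℝ) + 1) ^ 2 * ((k : ℝ) + 1) ^ c = ((k : ℝ) + 1) ^ (c + 2) := by
              rw [Real.rpow_add (by linarith [Nat.cast_nonneg (α := ℝ) k]),
                show ((2:ℝ)) = ((2:ℕ):ℝ) by norm_num, Real.rpow_natCast]
              ring
            rw [e1]
            calc ((k : ℝ) + 1) ^ (c + 2) ≤ ((k : ℝ) + 1) ^ ((m : ℕ) : ℝ) := by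
                  apply Real.rpow_le_rpow_of_exponent_le (by linarith [Nat.cast_nonneg (α := ℝ) k])
                  push_cast [hm]
                  linarith
              _ = ((k : ℝ) + 1) ^ m := Real.rpow_natCast _ m
          have hNc : (N : ℝ) ^ 2 * (N : ℝ) ^ c = (N : ℝ) ^ (c + 2) := by
            rw [Real.rpow_add hN0, show ((2:ℝ)) = ((2:ℕ):ℝ) by norm_num,
              Real.rpow_natCast]
            ring
          calc (((k : ℝ) + 1) * N) ^ 2 * r ^ (k * N) * (ε' * (((k : ℝ) + 1) ^ c * (N : ℝ) ^ c))
              = ε' * ((N : ℝ) ^ 2 * (N : ℝ) ^ c) *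
                ((((k : ℝ) + 1) ^ 2 * ((k : ℝ) + 1) ^ c) * (r ^ N) ^ k) := by
                rw [hrk]; ring
            _ ≤ ε' * ((N : ℝ) ^ 2 * (N : ℝ) ^ c) * (((k : ℝ) + 1) ^ m * s ^ k) := by
                apply mul_le_mul_of_nonneg_left _ (by positivity)
                apply mul_le_mul hkc hrs (by positivity)
                positivity
            _ = E * (((k : ℝ) + 1) ^ m * s ^ k) := by rw [hNc, hE]
  -- summability of blocks and of the bound
  have hg_sum : Summable (fun k : ℕ => E * (((k : ℝ) + 1) ^ m * s ^ k)) :=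
    (aux_summable13 m hs0 hs1).mul_left E
  have hB0 : ∀ k : ℕ, 0 ≤ ∑ j ∈ Finset.range N, a (k * N + j) :=
    fun k => Finset.sum_nonneg fun j _ => ha0 _
  have hB_sum : Summable (fun k : ℕ => ∑ j ∈ Finset.range N, a (k * N + j)) :=
    Summable.of_nonneg_of_le hB0 hblock hg_sum
  -- the tsum equals the sum over blocks
  have hT : (∑' n : ℕ, (n : ℝ) ^ 2 * f n * q ^ (2 * n)) =
      ∑' k : ℕ, ∑ j ∈ Finset.range N, a (k * N + j) := by
    have e1 : (∑' n : ℕ, (n : ℝ) ^ 2 * f n * q ^ (2 * n)) = ∑' n : ℕ, a n := by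
      apply tsum_congr
      intro n
      rw [ha, hrdef, pow_mul]
    have e2 : (∑' n : ℕ, a n) = ∑' pr : ℕ × Fin N, (a ∘ e) pr := (e.tsum_eq a).symm
    have e3 : (∑' pr : ℕ × Fin N, (a ∘ e) pr) = ∑' k : ℕ, ∑' j : Fin N, (a ∘ e) (k, j) :=
      Summable.tsum_prod' ha2 (fun b => Summable.of_finite)
    have e4 : ∀ k : ℕ, (∑' j : Fin N, (a ∘ e) (k, j)) = ∑ j ∈ Finset.range N, a (k * N + j) := by
      intro k
      rw [tsum_fintype]
      rw [← Fin.sum_univ_eq_sum_range (fun j => a (k * N + j)) N]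
      rfl
    rw [e1, e2, e3]
    exact tsum_congr e4
  -- finish
  have hTle : (∑' n : ℕ, (n : ℝ) ^ 2 * f n * q ^ (2 * n)) ≤ E * K := by
    rw [hT]
    calc (∑' k : ℕ, ∑ j ∈ Finset.range N, a (k * N + j))
        ≤ ∑' k : ℕ, E * (((k : ℝ) + 1) ^ m * s ^ k) := Summable.tsum_le_tsum hblock hB_sum hg_sum
      _ = E * K := by rw [hK, tsum_mul_left]
  have hT0 : 0 ≤ ∑' n : ℕ, (n : ℝ) ^ 2 * f n * q ^ (2 * n) := by
    apply tsum_nonneg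
    intro n
    have := hf n
    positivity
  have hrw : ‖∑' n : ℕ, (n : ℝ) ^ 2 * f n * (1 - 1 / (N : ℝ)) ^ (2 * n)‖ =
      ∑' n : ℕ, (n : ℝ) ^ 2 * f n * q ^ (2 * n) := by
    rw [Real.norm_eq_abs, abs_of_nonneg hT0]
  rw [hrw, Real.norm_eq_abs, abs_of_nonneg (Real.rpow_nonneg hN0.le _)]
  calc (∑' n : ℕ, (n : ℝ) ^ 2 * f n * q ^ (2 * n)) ≤ E * K := hTle
    _ = ε * (N : ℝ) ^ (c + 2) := by
        rw [hE, hε']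
        field_simp
end

section
/- Let c > 0 be a real number and let f : ℕ → ℝ be a nonnegative function such that Σ_{n ≤ x} f(n) = O(x^{c}) as x → ∞. Then, as the integer N → ∞, Σ_{n=0}^{∞} n·f(n)·(1 − 1/N)^{n} = O(N^{c+1}). -/
open Filter Asymptotics Finset Real

/-!
Cut `ℕ` into blocks `[k N, (k + 1) N)`. On the `k`-th block `n ≤ (k + 1) N` and
`(1 - 1 / N) ^ n ≤ e ^ (-k)`, while the mass of `f` on it is at most `D ((k + 1) N) ^ c`.
So the block contributes at most `D (k + 1) ^ (c + 1) e ^ (-k) N ^ (c + 1)`, and the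
series `∑ (k + 1) ^ (c + 1) e ^ (-k)` converges.
-/

lemma summable_add_one_rpow_mul_exp_neg (s : ℝ) :
    Summable fun k : ℕ => ((k : ℝ) + 1) ^ s * exp (-k) := by
  have hpow : (fun k : ℕ => ((k : ℝ) + 1) ^ s)
      =O[atTop] fun k : ℕ => exp (1 / 2 * ((k : ℝ) + 1)) :=
    (isLittleO_rpow_exp_pos_mul_atTop s one_half_pos).isBigO.comp_tendsto
      (tendsto_atTop_add_const_right _ 1 tendsto_natCast_atTop_atTop)
  have hgeom : Summable fun k : ℕ => exp (1 / 2) * exp (k * (-1 / 2)) :=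
    (summable_exp_nat_mul_iff.2 (by norm_num)).mul_left _
  refine summable_of_isBigO_nat hgeom ?_
  refine (hpow.mul (isBigO_refl (fun k : ℕ => exp (-k)) atTop)).congr_right fun k => ?_
  rw [← exp_add, ← exp_add]
  ring_nf

lemma exists_sum_range_le_mul_rpow {f : ℕ → ℝ} {c : ℝ} (hf : ∀ n, 0 ≤ f n)
    (h : (fun x : ℕ => ∑ n ∈ range (x + 1), f n) =O[atTop] fun x : ℕ => (x : ℝ) ^ c) :
    ∃ D, 0 ≤ D ∧ ∀ x : ℕ, ∑ n ∈ range x, f n ≤ D * (x : ℝ) ^ c := by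
  have hS : ∀ x, 0 ≤ ∑ n ∈ range x, f n := fun x => sum_nonneg fun n _ => hf n
  have hshift : (fun x : ℕ => ∑ n ∈ range x, f n) =O[atTop] fun x => ∑ n ∈ range (x + 1), f n :=
    isBigO_of_le _ fun x => by
      rw [norm_of_nonneg (hS _), norm_of_nonneg (hS _)]
      exact sum_le_sum_of_subset_of_nonneg (range_subset_range.2 x.le_succ) fun n _ _ => hf n
  have hzero : ∀ x : ℕ, (x : ℝ) ^ c = 0 → ∑ n ∈ range x, f n = 0 := fun x hx => by
    obtain rfl : x = 0 := by exact_mod_cast ((rpow_eq_zero_iff_of_nonneg x.cast_nonneg).1 hx).1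
    rfl
  obtain ⟨D, hD⟩ := (isBigO_nat_atTop_iff hzero).1 (hshift.trans h)
  refine ⟨D, (norm_nonneg (f 0)).trans (by simpa using hD 1), fun x => ?_⟩
  simpa only [norm_of_nonneg (hS x), norm_of_nonneg (rpow_nonneg x.cast_nonneg c)] using hD x

section Blocks

variable {f : ℕ → ℝ} {c D r : ℝ} {N : ℕ}

lemma sum_Ico_mul_mul_pow_le (hf : ∀ n, 0 ≤ f n)
    (hS : ∀ x : ℕ, ∑ n ∈ range x, f n ≤ D * (x : ℝ) ^ c) (hN : N ≠ 0)
    (hr0 : 0 ≤ r) (hr1 : r ≤ 1) (hrN : r ^ N ≤ exp (-1)) (k : ℕ) :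
    ∑ n ∈ Ico (k * N) ((k + 1) * N), n * f n * r ^ n
      ≤ D * (((k : ℝ) + 1) ^ (c + 1) * exp (-k)) * (N : ℝ) ^ (c + 1) := by
  set B : ℝ := (((k + 1) * N : ℕ) : ℝ) with hB
  have hweight : ∀ n ∈ Ico (k * N) ((k + 1) * N), (n : ℝ) * r ^ n ≤ B * exp (-k) := by
    intro n hn
    rw [mem_Ico] at hn
    have hrn : r ^ n ≤ exp (-k) := calc
      r ^ n ≤ r ^ (k * N) := pow_le_pow_of_le_one hr0 hr1 hn.1
      _ = (r ^ N) ^ k := by rw [mul_comm, pow_mul]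
      _ ≤ exp (-1) ^ k := pow_le_pow_left₀ (pow_nonneg hr0 N) hrN k
      _ = exp (-k) := by rw [← exp_nat_mul, mul_neg_one]
    exact mul_le_mul (by rw [hB]; exact_mod_cast hn.2.le) hrn (pow_nonneg hr0 n) (by positivity)
  calc ∑ n ∈ Ico (k * N) ((k + 1) * N), n * f n * r ^ n
      ≤ ∑ n ∈ Ico (k * N) ((k + 1) * N), B * exp (-k) * f n :=
        sum_le_sum fun n hn => by
          rw [mul_right_comm]; exact mul_le_mul_of_nonneg_right (hweight n hn) (hf n)
    _ = B * exp (-k) * ∑ n ∈ Ico (k * N) ((k + 1) * N), f n := by rw [mul_sum]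
    _ ≤ B * exp (-k) * ∑ n ∈ range ((k + 1) * N), f n :=
        mul_le_mul_of_nonneg_left (sum_le_sum_of_subset_of_nonneg
          (fun n hn => mem_range.2 (mem_Ico.1 hn).2) fun n _ _ => hf n) (by positivity)
    _ ≤ B * exp (-k) * (D * B ^ c) := by gcongr; exact hS _
    _ = D * (((k : ℝ) + 1) ^ (c + 1) * exp (-k)) * (N : ℝ) ^ (c + 1) := by
        have hN' : (N : ℝ) ≠ 0 := Nat.cast_ne_zero.2 hN
        rw [hB, Nat.cast_mul, Nat.cast_succ, mul_rpow (by positivity) (Nat.cast_nonneg N),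
          rpow_add_one (by positivity), rpow_add_one hN']
        ring

lemma sum_range_mul_mul_pow_le (hf : ∀ n, 0 ≤ f n)
    (hS : ∀ x : ℕ, ∑ n ∈ range x, f n ≤ D * (x : ℝ) ^ c) (hN : N ≠ 0)
    (hr0 : 0 ≤ r) (hr1 : r ≤ 1) (hrN : r ^ N ≤ exp (-1)) (q : ℕ) :
    ∑ n ∈ range (q * N), n * f n * r ^ n
      ≤ D * (∑ k ∈ range q, ((k : ℝ) + 1) ^ (c + 1) * exp (-k)) * (N : ℝ) ^ (c + 1) := by
  induction q with
  | zero => simp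
  | succ q ih =>
    rw [← sum_range_add_sum_Ico _ (Nat.mul_le_mul_right N q.le_succ), sum_range_succ, mul_add,
      add_mul]
    exact add_le_add ih (sum_Ico_mul_mul_pow_le hf hS hN hr0 hr1 hrN q)

lemma tsum_mul_mul_pow_le (hf : ∀ n, 0 ≤ f n)
    (hS : ∀ x : ℕ, ∑ n ∈ range x, f n ≤ D * (x : ℝ) ^ c) (hD : 0 ≤ D) (hN : N ≠ 0)
    (hr0 : 0 ≤ r) (hr1 : r ≤ 1) (hrN : r ^ N ≤ exp (-1)) :
    ∑' n : ℕ, n * f n * r ^ n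
      ≤ D * (∑' k : ℕ, ((k : ℝ) + 1) ^ (c + 1) * exp (-k)) * (N : ℝ) ^ (c + 1) := by
  have hterm : ∀ n : ℕ, 0 ≤ (n : ℝ) * f n * r ^ n := fun n => by have := hf n; positivity
  refine tsum_le_of_sum_range_le hterm fun M => ?_
  calc ∑ n ∈ range M, (n : ℝ) * f n * r ^ n
      ≤ ∑ n ∈ range (M * N), (n : ℝ) * f n * r ^ n :=
        sum_le_sum_of_subset_of_nonneg (range_subset_range.2 (Nat.le_mul_of_pos_right M
          (Nat.pos_of_ne_zero hN))) fun n _ _ => hterm n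
    _ ≤ D * (∑ k ∈ range M, ((k : ℝ) + 1) ^ (c + 1) * exp (-k)) * (N : ℝ) ^ (c + 1) :=
        sum_range_mul_mul_pow_le hf hS hN hr0 hr1 hrN M
    _ ≤ D * (∑' k : ℕ, ((k : ℝ) + 1) ^ (c + 1) * exp (-k)) * (N : ℝ) ^ (c + 1) := by
        gcongr
        exact (summable_add_one_rpow_mul_exp_neg _).sum_le_tsum _ fun k _ => by positivity

end Blocks

theorem stmt15_general (c : ℝ) (f : ℕ → ℝ) (hf : ∀ n, 0 ≤ f n)
    (h : (fun x : ℕ => ∑ n ∈ Finset.range (x + 1), f n)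
      =O[atTop] fun x : ℕ => (x : ℝ) ^ c) :
    (fun N : ℕ => ∑' n : ℕ, (n : ℝ) * f n * (1 - 1 / (N : ℝ)) ^ n)
      =O[atTop] fun N : ℕ => (N : ℝ) ^ (c + 1) := by
  obtain ⟨D, hD, hS⟩ := exists_sum_range_le_mul_rpow hf h
  refine IsBigO.of_bound (D * ∑' k : ℕ, ((k : ℝ) + 1) ^ (c + 1) * exp (-k)) ?_
  filter_upwards [eventually_ge_atTop 1] with N hN
  have hN1 : (1 : ℝ) ≤ N := by exact_mod_cast hN
  have hr0 : 0 ≤ 1 - 1 / (N : ℝ) := sub_nonneg.2 (div_le_one_of_le₀ hN1 (by positivity))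
  have hr1 : 1 - 1 / (N : ℝ) ≤ 1 := sub_le_self _ (by positivity)
  rw [norm_of_nonneg (tsum_nonneg fun n => by have := hf n; positivity),
    norm_of_nonneg (by positivity)]
  exact tsum_mul_mul_pow_le hf hS hD (by omega) hr0 hr1 (one_sub_div_pow_le_exp_neg hN1)

theorem stmt15 (c : ℝ) (hc : 0 < c) (f : ℕ → ℝ) (hf : ∀ n, 0 ≤ f n)
    (h : (fun x : ℕ => ∑ n ∈ Finset.range (x + 1), f n)
      =O[atTop] fun x : ℕ => (x : ℝ) ^ c) :
    (fun N : ℕ => ∑' n : ℕ, (n : ℝ) * f n * (1 - 1 / (N : ℝ)) ^ n)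
      =O[atTop] fun N : ℕ => (N : ℝ) ^ (c + 1) :=
  stmt15_general c f hf h
end

section
/- Let A_1, ..., A_k (k ≥ 2) be nonempty subsets of ℕ such that A_j(n) = Θ(A_1(n)) for every j = 2, ..., k and R_{A_1,...,A_k}(n) = Θ(n). Then A_1(n) = Θ(n^{1/k}). -/
open Filter Asymptotics

/-- `r_{A_1,…,A_k}(n) = |{(x_1,…,x_k) ∈ A_1 × ⋯ × A_k : x_1 + ⋯ + x_k = n}|`. -/
noncomputable def rk {k : ℕ} (A : Fin k → Set ℕ) (n : ℕ) : ℕ :=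
  {x : Fin k → ℕ | (∀ i, x i ∈ A i) ∧ ∑ i, x i = n}.ncard

/-- `R_{A_1,…,A_k}(n) = ∑_{j ≤ n} r_{A_1,…,A_k}(j)`. -/
noncomputable def Rk {k : ℕ} (A : Fin k → Set ℕ) (n : ℕ) : ℕ :=
  ∑ j ∈ Finset.range (n + 1), rk A j

/-- tuples with prescribed sum at most `n` -/
def Sset {k : ℕ} (A : Fin k → Set ℕ) (n : ℕ) : Set (Fin k → ℕ) :=
  {x | (∀ i, x i ∈ A i) ∧ ∑ i, x i ≤ n}

lemma Sset_subset_pi {k : ℕ} (A : Fin k → Set ℕ) (n : ℕ) :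
    Sset A n ⊆ Set.pi Set.univ (fun i => A i ∩ Set.Iic n) := by
  rintro x ⟨hx, hs⟩ i -
  refine ⟨hx i, ?_⟩
  calc x i ≤ ∑ j, x j := Finset.single_le_sum (fun j _ => Nat.zero_le _) (Finset.mem_univ i)
    _ ≤ n := hs

lemma Sset_finite {k : ℕ} (A : Fin k → Set ℕ) (n : ℕ) : (Sset A n).Finite := by
  exact Set.Finite.subset
    (Set.Finite.pi (t := fun i => A i ∩ Set.Iic n) (fun i => (Set.finite_Iic n).inter_of_right _))
    (Sset_subset_pi A n)

lemma rset_finite {k : ℕ} (A : Fin k → Set ℕ) (n : ℕ) :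
    {x : Fin k → ℕ | (∀ i, x i ∈ A i) ∧ ∑ i, x i = n}.Finite := by
  refine (Sset_finite A n).subset ?_
  rintro x ⟨hx, hs⟩; exact ⟨hx, hs.le⟩

lemma Rk_eq_ncard {k : ℕ} (A : Fin k → Set ℕ) (n : ℕ) : Rk A n = (Sset A n).ncard := by
  induction n with
  | zero =>
    have : Sset A 0 = {x : Fin k → ℕ | (∀ i, x i ∈ A i) ∧ ∑ i, x i = 0} := by
      ext x; simp [Sset, Nat.le_zero]
    simp [Rk, rk, this]
  | succ n ih =>
    have hU : Sset A (n + 1)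
        = Sset A n ∪ {x : Fin k → ℕ | (∀ i, x i ∈ A i) ∧ ∑ i, x i = n + 1} := by
      ext x
      simp only [Sset, Set.mem_setOf_eq, Set.mem_union]
      constructor
      · rintro ⟨hx, hs⟩
        rcases Nat.lt_or_ge (∑ i, x i) (n + 1) with h | h
        · exact Or.inl ⟨hx, Nat.lt_succ_iff.mp h⟩
        · exact Or.inr ⟨hx, le_antisymm hs h⟩
      · rintro (⟨hx, hs⟩ | ⟨hx, hs⟩)
        · exact ⟨hx, hs.trans (Nat.le_succ n)⟩
        · exact ⟨hx, hs.le⟩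
    have hdisj : Disjoint (Sset A n)
        {x : Fin k → ℕ | (∀ i, x i ∈ A i) ∧ ∑ i, x i = n + 1} := by
      rw [Set.disjoint_left]
      rintro x ⟨_, hs⟩ ⟨_, hs'⟩
      omega
    rw [Rk, Finset.sum_range_succ, ← Rk, ih, hU,
      Set.ncard_union_eq hdisj (Sset_finite A n) (rset_finite A (n + 1))]
    rfl

lemma ncard_pi {ι : Type*} [Fintype ι] {β : ι → Type*} (t : ∀ i, Set (β i)) :
    (Set.pi Set.univ t).ncard = ∏ i, (t i).ncard := by
  rw [← Nat.card_coe_set_eq, Nat.card_congr (Equiv.Set.univPi t), Nat.card_pi]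
  simp [Nat.card_coe_set_eq]

lemma Rk_le_prod {k : ℕ} (A : Fin k → Set ℕ) (n : ℕ) :
    Rk A n ≤ ∏ i, countFn (A i) n := by
  rw [Rk_eq_ncard]
  calc (Sset A n).ncard ≤ (Set.pi Set.univ (fun i => A i ∩ Set.Iic n)).ncard := by
        refine Set.ncard_le_ncard (Sset_subset_pi A n) ?_
        exact Set.Finite.pi (fun i => (Set.finite_Iic n).inter_of_right _)
    _ = ∏ i, countFn (A i) n := by rw [ncard_pi]; rfl

lemma prod_le_Rk {k : ℕ} (A : Fin k → Set ℕ) (m : ℕ) :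
    ∏ i, countFn (A i) m ≤ Rk A (k * m) := by
  rw [Rk_eq_ncard]
  have hsub : Set.pi Set.univ (fun i => A i ∩ Set.Iic m) ⊆ Sset A (k * m) := by
    intro x hx
    refine ⟨fun i => (hx i (Set.mem_univ i)).1, ?_⟩
    calc ∑ i, x i ≤ ∑ _i : Fin k, m :=
          Finset.sum_le_sum (fun i _ => (hx i (Set.mem_univ i)).2)
      _ = k * m := by simp [Finset.sum_const, mul_comm]
  calc ∏ i, countFn (A i) m = (Set.pi Set.univ (fun i => A i ∩ Set.Iic m)).ncard := by
        rw [ncard_pi]; rfl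
    _ ≤ (Sset A (k * m)).ncard := Set.ncard_le_ncard hsub (Sset_finite A (k * m))

lemma rpow_aux_le {a n c : ℝ} {k : ℕ} (hk : k ≠ 0) (ha : 0 ≤ a) (hc : 0 ≤ c) (hn : 0 ≤ n)
    (h : a ^ k ≤ c * n) : a ≤ c ^ ((1 : ℝ) / k) * n ^ ((1 : ℝ) / k) := by
  have hk' : (k : ℝ) ≠ 0 := Nat.cast_ne_zero.mpr hk
  have h1 : a = (a ^ k) ^ ((1 : ℝ) / k) := by
    rw [← Real.rpow_natCast a k, ← Real.rpow_mul ha, mul_one_div, div_self hk', Real.rpow_one]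
  rw [h1, ← Real.mul_rpow hc hn]
  exact Real.rpow_le_rpow (pow_nonneg ha k) h (by positivity)

lemma rpow_aux_ge {a n c : ℝ} {k : ℕ} (hk : k ≠ 0) (ha : 0 ≤ a) (hc : 0 ≤ c) (hn : 0 ≤ n)
    (h : c * n ≤ a ^ k) : c ^ ((1 : ℝ) / k) * n ^ ((1 : ℝ) / k) ≤ a := by
  have hk' : (k : ℝ) ≠ 0 := Nat.cast_ne_zero.mpr hk
  have h1 : a = (a ^ k) ^ ((1 : ℝ) / k) := by
    rw [← Real.rpow_natCast a k, ← Real.rpow_mul ha, mul_one_div, div_self hk', Real.rpow_one]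
  rw [h1, ← Real.mul_rpow hc hn]
  exact Real.rpow_le_rpow (mul_nonneg hc hn) h (by positivity)

theorem stmt16 (k : ℕ) (hk : 2 ≤ k) (A : Fin k → Set ℕ)
    (hne : ∀ i, (A i).Nonempty)
    (h1 : ∀ j : Fin k, ∃ c₁ c₂ : ℝ, 0 < c₁ ∧ 0 < c₂ ∧ ∀ᶠ n : ℕ in atTop,
      c₁ * (countFn (A ⟨0, by omega⟩) n : ℝ) ≤ (countFn (A j) n : ℝ) ∧
      (countFn (A j) n : ℝ) ≤ c₂ * (countFn (A ⟨0, by omega⟩) n : ℝ))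
    (h2 : ∃ c₁ c₂ : ℝ, 0 < c₁ ∧ 0 < c₂ ∧ ∀ᶠ n : ℕ in atTop,
      c₁ * (n : ℝ) ≤ (Rk A n : ℝ) ∧ (Rk A n : ℝ) ≤ c₂ * (n : ℝ)) :
    ∃ c₁ c₂ : ℝ, 0 < c₁ ∧ 0 < c₂ ∧ ∀ᶠ n : ℕ in atTop,
      c₁ * (n : ℝ) ^ ((1 : ℝ) / k) ≤ (countFn (A ⟨0, by omega⟩) n : ℝ) ∧
      (countFn (A ⟨0, by omega⟩) n : ℝ) ≤ c₂ * (n : ℝ) ^ ((1 : ℝ) / k) := by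
  have hk0 : k ≠ 0 := by omega
  obtain ⟨d₁, d₂, hd₁, hd₂, hd⟩ := h2
  choose cl cu hcl hcu hc using h1
  set A1 : ℕ → ℝ := fun n => (countFn (A ⟨0, by omega⟩) n : ℝ) with hA1
  have hA1nn : ∀ n, 0 ≤ A1 n := fun n => Nat.cast_nonneg _
  set Cl : ℝ := ∏ j, cl j with hCl
  set Cu : ℝ := ∏ j, cu j with hCu
  have hClpos : 0 < Cl := Finset.prod_pos (fun j _ => hcl j)
  have hCupos : 0 < Cu := Finset.prod_pos (fun j _ => hcu j)
  -- products sandwich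
  have hcall : ∀ᶠ n : ℕ in atTop, ∀ j : Fin k,
      cl j * A1 n ≤ (countFn (A j) n : ℝ) ∧ (countFn (A j) n : ℝ) ≤ cu j * A1 n :=
    eventually_all.mpr hc
  have hprod : ∀ᶠ n : ℕ in atTop,
      Cl * A1 n ^ k ≤ ∏ j, (countFn (A j) n : ℝ) ∧
      (∏ j, (countFn (A j) n : ℝ)) ≤ Cu * A1 n ^ k := by
    filter_upwards [hcall] with n hn
    have hlo : ∏ j, (cl j * A1 n) ≤ ∏ j, (countFn (A j) n : ℝ) :=
      Finset.prod_le_prod (fun j _ => mul_nonneg (hcl j).le (hA1nn n)) (fun j _ => (hn j).1)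
    have hhi : ∏ j, (countFn (A j) n : ℝ) ≤ ∏ j, (cu j * A1 n) :=
      Finset.prod_le_prod (fun j _ => Nat.cast_nonneg _) (fun j _ => (hn j).2)
    have e1 : ∏ j, (cl j * A1 n) = Cl * A1 n ^ k := by
      rw [Finset.prod_mul_distrib, Finset.prod_const, Finset.card_univ, Fintype.card_fin]
    have e2 : ∏ j, (cu j * A1 n) = Cu * A1 n ^ k := by
      rw [Finset.prod_mul_distrib, Finset.prod_const, Finset.card_univ, Fintype.card_fin]
    exact ⟨e1 ▸ hlo, e2 ▸ hhi⟩
  refine ⟨(d₁ / Cu) ^ ((1 : ℝ) / k), (d₂ * k / Cl) ^ ((1 : ℝ) / k),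
    Real.rpow_pos_of_pos (by positivity) _, Real.rpow_pos_of_pos (by positivity) _, ?_⟩
  obtain ⟨N₁, hN₁⟩ := eventually_atTop.mp hd
  obtain ⟨N₂, hN₂⟩ := eventually_atTop.mp hprod
  rw [eventually_atTop]
  refine ⟨N₁ + N₂ + 1, fun n hn => ?_⟩
  have hnN₁ : N₁ ≤ n := by omega
  have hnN₂ : N₂ ≤ n := by omega
  have hnpos : (0 : ℝ) ≤ (n : ℝ) := Nat.cast_nonneg n
  constructor
  · -- lower bound: d₁ n ≤ Rk n ≤ ∏ ≤ Cu A1(n)^k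
    have hchain : (d₁ / Cu) * n ≤ A1 n ^ k := by
      rw [div_mul_eq_mul_div, div_le_iff₀ hCupos]
      calc d₁ * n ≤ (Rk A n : ℝ) := (hN₁ n hnN₁).1
        _ ≤ ∏ j, (countFn (A j) n : ℝ) := by
            exact_mod_cast Nat.cast_le.mpr (by exact_mod_cast Rk_le_prod A n)
        _ ≤ Cu * A1 n ^ k := (hN₂ n hnN₂).2
        _ = A1 n ^ k * Cu := mul_comm _ _
    exact rpow_aux_ge hk0 (hA1nn n) (by positivity) hnpos hchain
  · -- upper bound: Cl A1(n)^k ≤ ∏ ≤ Rk (k n) ≤ d₂ k n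
    have hkn : N₁ ≤ k * n := le_trans hnN₁ (Nat.le_mul_of_pos_left n (by omega))
    have hchain : A1 n ^ k ≤ (d₂ * k / Cl) * n := by
      rw [div_mul_eq_mul_div, le_div_iff₀ hClpos]
      calc A1 n ^ k * Cl = Cl * A1 n ^ k := mul_comm _ _
        _ ≤ ∏ j, (countFn (A j) n : ℝ) := (hN₂ n hnN₂).1
        _ ≤ (Rk A (k * n) : ℝ) := by exact_mod_cast prod_le_Rk A n
        _ ≤ d₂ * (k * n : ℕ) := (hN₁ (k * n) hkn).2
        _ = d₂ * k * n := by push_cast; ring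
    exact rpow_aux_le hk0 (hA1nn n) (by positivity) hnpos hchain
end
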